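/- Let K be a number field, let p be a rational prime, and let P_∞ be a fixed infinite place of K. Define the divisor ω_K' on K as follows: at each nonzero prime ideal Q of 𝓞_K its coefficient is r_Q − 2e_Q·[Q divides p𝓞_K], where r_Q is the exponent of Q in the different ideal of 𝓞_K over ℤ and e_Q is the ramification index of Q over p; at each complex infinite place its coefficient is −log 2, at each real infinite place its coefficient is 0, and the coefficient at P_∞ is additionally increased by a_∞ = (∑_{Q | p} 2e_Q·log N(Q))/m_{P_∞}. Then deg ω_K' = |disc_K|·2^{-S₂(K)}. -/

import Mathlib

open NumberField IsDedekindDomain Ideal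

variable (K : Type*) [Field K] [NumberField K]

/-- A divisor on a number field: a finitely supported integer coefficient at each
nonzero prime ideal of the ring of integers, and a real coefficient at each infinite place. -/
structure Divisor where
  a : HeightOneSpectrum (𝓞 K) → ℤ
  r : InfinitePlace K → ℝ
  fin : (Function.support a).Finite

variable {K}

/-- The (multiplicative) degree of a divisor:
`deg D = ∏_P N(P)^(a_P) * ∏_w exp (m_w * r_w)`. -/
noncomputable def Divisor.deg (D : Divisor K) : ℝ :=
  (∏ᶠ P : HeightOneSpectrum (𝓞 K), (absNorm P.asIdeal : ℝ) ^ (D.a P)) *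
    ∏ w : InfinitePlace K, Real.exp (w.mult * D.r w)

open scoped Classical in
/-- The normalized P-adic absolute value `|α|_P = N(P)^(-v_P α)`. -/
noncomputable def padicAbs (P : HeightOneSpectrum (𝓞 K)) (α : K) : ℝ :=
  if hα : α = 0 then 0
  else (absNorm P.asIdeal : ℝ) ^
    (Multiplicative.toAdd (WithZero.unzero ((P.valuation K).ne_zero_iff.mpr hα)))

/-- The set of multiples of a divisor:
`H⁰(D) = {α : |α|_P ≤ N(P)^(a_P) for all P, and w(α)^(m_w) ≤ exp (m_w * r_w) for all w}`. -/
def H0 (D : Divisor K) : Set K :=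
  {α | (∀ P : HeightOneSpectrum (𝓞 K), padicAbs P α ≤ (absNorm P.asIdeal : ℝ) ^ (D.a P)) ∧
    ∀ w : InfinitePlace K, (w α) ^ w.mult ≤ Real.exp (w.mult * D.r w)}

/-- `h⁰(D)` is the cardinality of `H⁰(D)`. -/
noncomputable def h0 (D : Divisor K) : ℕ := Nat.card (H0 D)

/-- Coefficientwise difference of divisors. -/
noncomputable def Divisor.sub (D E : Divisor K) : Divisor K :=
  ⟨D.a - E.a, D.r - E.r, ((D.fin.union E.fin).subset (Function.support_sub D.a E.a))⟩

variable (K)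

/-- `S₁(K)` is the number of real places of `K`. -/
noncomputable def S1 : ℕ := InfinitePlace.nrRealPlaces K

/-- `S₂(K)` is twice the number of complex places of `K`. -/
noncomputable def S2 : ℕ := 2 * InfinitePlace.nrComplexPlaces K

open scoped Classical in
/-- The exponent of the nonzero prime ideal `P` in the factorization of the ideal `I`. -/
noncomputable def primeExponent {R : Type*} [CommRing R] [IsDedekindDomain R]
    (P : HeightOneSpectrum R) (I : Ideal R) : ℕ :=
  (UniqueFactorizationMonoid.normalizedFactors I).count P.asIdeal

/-!
Taking logarithms turns the degree into `∑_Q a_Q log N(Q) + ∑_w m_w r_w`. The terms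
`2 e_Q log N(Q)` removed at the primes above `p` are exactly what `a_∞` puts back at `P_∞`, and
each complex place contributes `2 · (-log 2)`. What remains is `∑_Q r_Q log N(Q)`, the logarithm
of the norm of the different ideal, which is `log |disc_K|`.
-/

section Dedekind

variable {R : Type*} [CommRing R] [IsDedekindDomain R]

theorem hasFiniteSupport_ite_dvd {I : Ideal R} (hI : I ≠ 0) {M : Type*} [Zero M]
    (f : HeightOneSpectrum R → M) [DecidablePred fun Q : HeightOneSpectrum R => Q.asIdeal ∣ I] :
    Function.HasFiniteSupport fun Q => if Q.asIdeal ∣ I then f Q else 0 :=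
  (Ideal.finite_factors hI).subset fun _ hQ => by_contra fun hdvd => hQ (if_neg hdvd)

theorem maxPowDividing_eq_pow_primeExponent {I : Ideal R} (hI : I ≠ 0) (P : HeightOneSpectrum R) :
    P.maxPowDividing I = P.asIdeal ^ primeExponent P I := by
  rw [HeightOneSpectrum.maxPowDividing, primeExponent,
    Ideal.count_associates_factors_eq hI P.isPrime P.ne_bot]

variable [Module.Free ℤ R]

theorem finprod_absNorm_pow_primeExponent {I : Ideal R} (hI : I ≠ 0) :
    ∏ᶠ P : HeightOneSpectrum R, absNorm P.asIdeal ^ primeExponent P I = absNorm I := by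
  conv_rhs => rw [← Ideal.finprod_heightOneSpectrum_factorization hI,
    map_finprod absNorm (Ideal.hasFiniteMulSupport hI)]
  simp [maxPowDividing_eq_pow_primeExponent hI]

theorem finsum_primeExponent_mul_log_absNorm [Module.Finite ℤ R] {I : Ideal R} (hI : I ≠ 0) :
    ∑ᶠ P : HeightOneSpectrum R, (primeExponent P I : ℝ) * Real.log (absNorm P.asIdeal) =
      Real.log (absNorm I) := by
  have hpos (P : HeightOneSpectrum R) : (0 : ℝ) < absNorm P.asIdeal :=
    Nat.cast_pos.mpr (Nat.pos_of_ne_zero (absNorm_eq_zero_iff.not.mpr P.ne_bot))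
  have hcast := (Nat.castRingHom ℝ).toMonoidHom.map_finprod_of_injective Nat.cast_injective
    fun P : HeightOneSpectrum R => absNorm P.asIdeal ^ primeExponent P I
  simp only [RingHom.toMonoidHom_eq_coe, MonoidHom.coe_coe, eq_natCast, Nat.cast_pow,
    finprod_absNorm_pow_primeExponent hI] at hcast
  rw [hcast, Real.log_finprod fun P => pow_pos (hpos P) _]
  simp only [Real.log_pow]

end Dedekind

namespace Divisor

variable {K}

theorem deg_eq_exp (D : Divisor K) :
    D.deg = Real.exp (∑ᶠ P, (D.a P : ℝ) * Real.log (absNorm P.asIdeal) +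
      ∑ w, (w.mult : ℝ) * D.r w) := by
  have hpos (P : HeightOneSpectrum (𝓞 K)) : (0 : ℝ) < (absNorm P.asIdeal : ℝ) ^ D.a P :=
    zpow_pos (mod_cast zero_lt_one.trans (NumberField.HeightOneSpectrum.one_lt_absNorm P)) _
  rw [Real.exp_add, Real.exp_sum, deg]
  congr 1
  simp_rw [← Real.log_zpow]
  rw [← Real.log_finprod hpos,
    Real.exp_log (finprod_induction _ one_pos (fun _ _ => mul_pos) hpos)]

end Divisor

open scoped Classical in
theorem sum_mult_mul_ite_isComplex (x : ℝ) :
    ∑ w : InfinitePlace K, (w.mult : ℝ) * (if w.IsComplex then x else 0) = S2 K * x := by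
  have hcomplex :
      ∀ w ∈ Finset.univ.filter (InfinitePlace.IsComplex (K := K)), (w.mult : ℝ) * x = 2 * x :=
    fun _ hw => by rw [(Finset.mem_filter.mp hw).2.mult_eq_two, Nat.cast_ofNat]
  simp_rw [mul_ite, mul_zero]
  rw [Finset.sum_ite, Finset.sum_const_zero, add_zero, Finset.sum_congr rfl hcomplex,
    Finset.sum_const, ← Fintype.card_subtype, S2, nsmul_eq_mul]
  push_cast
  ring

open scoped Classical in
/-- The divisor `ω_K'` built from a rational prime `p` and a chosen infinite place `P_∞` has
degree `|disc K| * 2^(-S₂ K)`.  Its coefficient at a nonzero prime ideal `Q` is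
`r_Q - 2 e_Q · [Q ∣ p𝓞_K]` (`r_Q` the exponent of `Q` in the different ideal of `𝓞 K` over `ℤ`,
`e_Q` the ramification index of `Q` over `p`), its coefficient at a complex (resp. real)
infinite place is `-log 2` (resp. `0`), the coefficient at `P_∞` being increased by
`a_∞ = (∑_{Q ∣ p} 2 e_Q log N(Q)) / m_{P_∞}`. -/
theorem deg_omega_prime (p : ℕ) (hp : p.Prime) (Pinf : InfinitePlace K) (ω : Divisor K)
    (ha : ∀ Q : HeightOneSpectrum (𝓞 K),
      ω.a Q = (primeExponent Q (differentIdeal ℤ (𝓞 K)) : ℤ) -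
        2 * (ramificationIdx' (Ideal.span {(p : ℤ)}) Q.asIdeal : ℤ) *
          (if Q.asIdeal ∣ Ideal.span {(p : 𝓞 K)} then 1 else 0))
    (hr : ∀ w : InfinitePlace K,
      ω.r w = (if w.IsComplex then -Real.log 2 else 0) +
        (if w = Pinf then
          (∑ᶠ Q : HeightOneSpectrum (𝓞 K),
            if Q.asIdeal ∣ Ideal.span {(p : 𝓞 K)} then
              2 * (ramificationIdx' (Ideal.span {(p : ℤ)}) Q.asIdeal : ℝ) *
                Real.log (absNorm Q.asIdeal) else 0) / (Pinf.mult : ℝ)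
        else 0)) :
    ω.deg = |(discr K : ℝ)| * 2 ^ (-(S2 K : ℤ)) := by
  set s : HeightOneSpectrum (𝓞 K) → ℝ := fun Q =>
    if Q.asIdeal ∣ Ideal.span {(p : 𝓞 K)} then
      2 * (ramificationIdx' (Ideal.span {(p : ℤ)}) Q.asIdeal : ℝ) *
        Real.log (absNorm Q.asIdeal) else 0 with hs
  have hspan : Ideal.span {(p : 𝓞 K)} ≠ 0 := by
    simpa [Ideal.span_singleton_eq_bot] using hp.ne_zero
  have hfinite : ∑ᶠ Q, (ω.a Q : ℝ) * Real.log (absNorm Q.asIdeal) =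
      Real.log |(discr K : ℝ)| - ∑ᶠ Q, s Q := by
    have hsplit (Q : HeightOneSpectrum (𝓞 K)) :
        (primeExponent Q (differentIdeal ℤ (𝓞 K)) : ℝ) * Real.log (absNorm Q.asIdeal) =
          (ω.a Q : ℝ) * Real.log (absNorm Q.asIdeal) + s Q := by
      by_cases hdvd : Q.asIdeal ∣ Ideal.span {(p : 𝓞 K)} <;>
        simp only [ha Q, hs, hdvd, if_true, if_false] <;> push_cast <;> ring
    have hfin_a :
        Function.HasFiniteSupport fun Q => (ω.a Q : ℝ) * Real.log (absNorm Q.asIdeal) :=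
      ω.fin.subset fun Q hQ hzero => hQ (by simp [hzero])
    rw [eq_sub_iff_add_eq, ← finsum_add_distrib hfin_a (hasFiniteSupport_ite_dvd hspan _),
      ← finsum_congr hsplit, finsum_primeExponent_mul_log_absNorm differentIdeal_ne_bot,
      absNorm_differentIdeal K (𝓞 K), Nat.cast_natAbs, Int.cast_abs]
  have harch : ∑ w, (w.mult : ℝ) * ω.r w = -(S2 K : ℝ) * Real.log 2 + ∑ᶠ Q, s Q := by
    simp_rw [hr, mul_add, Finset.sum_add_distrib, sum_mult_mul_ite_isComplex, mul_ite, mul_zero,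
      Finset.sum_ite_eq', Finset.mem_univ, if_true]
    rw [mul_div_cancel₀ _ InfinitePlace.mult_coe_ne_zero]
    ring
  have hdiscr : (0 : ℝ) < |(discr K : ℝ)| := by simpa using discr_ne_zero K
  rw [Divisor.deg_eq_exp, hfinite, harch,
    show ∀ a b c : ℝ, a - c + (b + c) = a + b by intros; ring,
    Real.exp_add, Real.exp_log hdiscr, ← Real.rpow_intCast, Real.rpow_def_of_pos two_pos]
  push_cast
  rw [mul_comm (Real.log 2)]
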